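/- Let X be a GO space, D an ultrafilter on a set I, (x_i)_{i∈I} a sequence in X, and let A = {x ∈ X : {i ∈ I : x < x_i} ∈ D} and B = {x ∈ X : {i ∈ I : x_i < x} ∈ D}. Suppose X = A ∪ B. For i ∈ I define O_i = ⋃_{a ∈ A} (x_i, a) if x_i ∈ A, and O_i = ⋃_{b ∈ B} (b, x_i) if x_i ∈ B (intervals computed in X). Then (x_i)_{i∈I} D-converges to x ∈ X if and only if x is a D-limit point of the sequence of sets (O_i)_{i∈I}. -/

import Mathlib

universe u v

open Set Cardinal Filter Topology TopologicalSpace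

section Defs

variable {X : Type u} [LinearOrder X]

/-- A subset `Y` of a linear order `X`, having no maximum, is `lam`-full in `X` on the right
if for every `y ∈ Y` the set `⋃ y' ∈ Y, (y, y')` (intervals computed in `X`)
has cardinality at least `lam`. -/
def FullRight (lam : Cardinal.{u}) (Y : Set X) : Prop :=
  (¬ ∃ m ∈ Y, ∀ y ∈ Y, y ≤ m) ∧
    ∀ y ∈ Y, lam ≤ #(⋃ y' ∈ Y, Ioo y y')

/-- A subset `Y` of a linear order `X`, having no minimum, is `lam`-full in `X` on the left
if for every `y ∈ Y` the set `⋃ y' ∈ Y, (y', y)` (intervals computed in `X`)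
has cardinality at least `lam`. -/
def FullLeft (lam : Cardinal.{u}) (Y : Set X) : Prop :=
  (¬ ∃ m ∈ Y, ∀ y ∈ Y, m ≤ y) ∧
    ∀ y ∈ Y, lam ≤ #(⋃ y' ∈ Y, Ioo y' y)

/-- The pair `(A, B)` is a gap of the space `X`: `A`, `B` are open, `A ∪ B = X`,
every element of `A` is less than every element of `B`, `A` has no maximum and `B` has
no minimum (`A` or `B` may be empty). -/
def IsGap [TopologicalSpace X] (A B : Set X) : Prop :=
  IsOpen A ∧ IsOpen B ∧ A ∪ B = Set.univ ∧ (∀ a ∈ A, ∀ b ∈ B, a < b) ∧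
    (¬ ∃ m ∈ A, ∀ a ∈ A, a ≤ m) ∧ (¬ ∃ m ∈ B, ∀ b ∈ B, m ≤ b)

/-- The pair `(A, B)` is a pseudo-gap of the space `X`: `A`, `B` are open and nonempty,
`A ∪ B = X`, every element of `A` is less than every element of `B`, and either `A` has a
maximum and `B` has no minimum, or `A` has no maximum and `B` has a minimum. -/
def IsPseudoGap [TopologicalSpace X] (A B : Set X) : Prop :=
  IsOpen A ∧ IsOpen B ∧ A ∪ B = Set.univ ∧ (∀ a ∈ A, ∀ b ∈ B, a < b) ∧
    A.Nonempty ∧ B.Nonempty ∧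
    (((∃ m ∈ A, ∀ a ∈ A, a ≤ m) ∧ ¬ ∃ m ∈ B, ∀ b ∈ B, m ≤ b) ∨
      ((¬ ∃ m ∈ A, ∀ a ∈ A, a ≤ m) ∧ ∃ m ∈ B, ∀ b ∈ B, m ≤ b))

/-- The cofinality of `A`: the least cardinality of a subset of `A` cofinal in `A`. -/
noncomputable def cofinCard (A : Set X) : Cardinal.{u} :=
  sInf {c | ∃ S : Set X, S ⊆ A ∧ (∀ a ∈ A, ∃ s ∈ S, a ≤ s) ∧ c = #S}

/-- The coinitiality of `B`: the least cardinality of a subset of `B` coinitial in `B`. -/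
noncomputable def coinitCard (B : Set X) : Cardinal.{u} :=
  sInf {c | ∃ S : Set X, S ⊆ B ∧ (∀ b ∈ B, ∃ s ∈ S, s ≤ b) ∧ c = #S}

/-- `mu` is a type of the gap `(A, B)`: `mu` is the cofinality of `A` or the coinitiality
of `B`. -/
def IsGapType (mu : Cardinal.{u}) (A B : Set X) : Prop :=
  mu = cofinCard A ∨ mu = coinitCard B

/-- `mu` is the type of the pseudo-gap `(A, B)`: the cofinality of `A` if `B` has a minimum,
the coinitiality of `B` if `A` has a maximum. -/
def IsPseudoGapType (mu : Cardinal.{u}) (A B : Set X) : Prop :=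
  ((∃ m ∈ B, ∀ b ∈ B, m ≤ b) ∧ mu = cofinCard A) ∨
    ((∃ m ∈ A, ∀ a ∈ A, a ≤ m) ∧ mu = coinitCard B)

end Defs

/-- A topological space is `[ν, ν]`-compact if every open cover of cardinality at most `ν`
has a subcover of cardinality less than `ν`. -/
def NuNuCompact (X : Type u) [TopologicalSpace X] (ν : Cardinal.{u}) : Prop :=
  ∀ 𝒰 : Set (Set X), (∀ U ∈ 𝒰, IsOpen U) → ⋃₀ 𝒰 = Set.univ → #𝒰 ≤ ν →
    ∃ 𝒱 ⊆ 𝒰, #𝒱 < ν ∧ ⋃₀ 𝒱 = Set.univ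

/-- A topological space is weakly `[ν, ν]`-compact if every open cover of cardinality at
most `ν` has a subfamily of cardinality less than `ν` whose union is dense. -/
def WeakNuNuCompact (X : Type u) [TopologicalSpace X] (ν : Cardinal.{u}) : Prop :=
  ∀ 𝒰 : Set (Set X), (∀ U ∈ 𝒰, IsOpen U) → ⋃₀ 𝒰 = Set.univ → #𝒰 ≤ ν →
    ∃ 𝒱 ⊆ 𝒰, #𝒱 < ν ∧ Dense (⋃₀ 𝒱)

/-- A topological space is initially `lam`-compact if every open cover of cardinality at
most `lam` has a finite subcover. -/
def InitiallyCompact (X : Type u) [TopologicalSpace X] (lam : Cardinal.{u}) : Prop :=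
  ∀ 𝒰 : Set (Set X), (∀ U ∈ 𝒰, IsOpen U) → ⋃₀ 𝒰 = Set.univ → #𝒰 ≤ lam →
    ∃ 𝒱 ⊆ 𝒰, 𝒱.Finite ∧ ⋃₀ 𝒱 = Set.univ

/-- A topological space is weakly initially `lam`-compact if every open cover of cardinality
at most `lam` has a finite subfamily whose union is dense. -/
def WeakInitiallyCompact (X : Type u) [TopologicalSpace X] (lam : Cardinal.{u}) : Prop :=
  ∀ 𝒰 : Set (Set X), (∀ U ∈ 𝒰, IsOpen U) → ⋃₀ 𝒰 = Set.univ → #𝒰 ≤ lam →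
    ∃ 𝒱 ⊆ 𝒰, 𝒱.Finite ∧ Dense (⋃₀ 𝒱)

/-- The sequence `x` `D`-converges to `p`: for every open neighbourhood `U` of `p`,
`{i | x i ∈ U} ∈ D`. -/
def DConv {I : Type v} {X : Type u} [TopologicalSpace X] (D : Ultrafilter I)
    (x : I → X) (p : X) : Prop :=
  ∀ U : Set X, IsOpen U → p ∈ U → {i | x i ∈ U} ∈ D

/-- `X` is `D`-compact: every `I`-indexed sequence of elements of `X` `D`-converges to some
point of `X`. -/
def DCompact {I : Type v} (D : Ultrafilter I) (X : Type u) [TopologicalSpace X] : Prop :=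
  ∀ x : I → X, ∃ p : X, DConv D x p

/-- `p` is a `D`-limit point of the sequence of sets `Y`: for every neighbourhood `U`
of `p`, `{i | U ∩ Y i ≠ ∅} ∈ D`. -/
def DLimitPt {I : Type v} {X : Type u} [TopologicalSpace X] (D : Ultrafilter I)
    (Y : I → Set X) (p : X) : Prop :=
  ∀ U ∈ nhds p, {i | (U ∩ Y i).Nonempty} ∈ D

/-- `X` is `D`-pseudocompact: every `I`-indexed sequence of nonempty open sets of `X` has a
`D`-limit point. -/
def DPseudocompact {I : Type v} (D : Ultrafilter I) (X : Type u) [TopologicalSpace X] : Prop :=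
  ∀ O : I → Set X, (∀ i, IsOpen (O i)) → (∀ i, (O i).Nonempty) → ∃ p : X, DLimitPt D O p

/-- The ultrafilter `D` is `ν`-decomposable: there is `f : I → ν` such that the preimage of
every subset of `ν` of cardinality less than `ν` is not in `D`. -/
def Decomposable {I : Type v} (D : Ultrafilter I) (ν : Cardinal.{u}) : Prop :=
  ∃ f : I → ν.ord.ToType, ∀ S : Set ν.ord.ToType, #S < ν → f ⁻¹' S ∉ D

/-!
Write `A` for the lower cut and `B` for the upper cut of the sequence. Every point of `A` lies
below every point of `B`, so a point of `O i` that lies in `A` is above `x i`, and one that lies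
in `B` is below `x i`. If `x` converges to `p`, then `D`-almost all `x i` lie in the same cut,
say `A`, and for such `i` the points `x j` slightly further along the sequence already lie in
`O i`. Conversely, if `p ∈ A` and a convex neighbourhood `W` of `p` meets `B`, then `x i` is
eventually squeezed into `W`; if `W ⊆ A`, a point of `W ∩ O i` lies above `x i`, and `x i`
lies between `p` and that point.
-/

section UltrafilterCut

variable {X : Type*} [LinearOrder X] {I : Type*}

def lowerCut (D : Ultrafilter I) (x : I → X) : Set X := {p | ∀ᶠ i in (D : Filter I), p < x i}

def upperCut (D : Ultrafilter I) (x : I → X) : Set X := {p | ∀ᶠ i in (D : Filter I), x i < p}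

variable {D : Ultrafilter I} {x : I → X} {O : I → Set X}

theorem eventually_mem_Ioo_of_mem_lowerCut_of_mem_upperCut {a b : X} (ha : a ∈ lowerCut D x)
    (hb : b ∈ upperCut D x) : ∀ᶠ i in (D : Filter I), x i ∈ Ioo a b :=
  ha.and hb

theorem lt_of_mem_lowerCut_of_mem_upperCut {a b : X} (ha : a ∈ lowerCut D x)
    (hb : b ∈ upperCut D x) : a < b :=
  let ⟨_, hab⟩ := (eventually_mem_Ioo_of_mem_lowerCut_of_mem_upperCut ha hb).exists
  hab.1.trans hab.2

theorem eventually_eventually_mem_of_eventually_mem_lowerCut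
    (hOA : ∀ i, x i ∈ lowerCut D x → O i = ⋃ a ∈ lowerCut D x, Ioo (x i) a)
    (hA : ∀ᶠ i in (D : Filter I), x i ∈ lowerCut D x) :
    ∀ᶠ i in (D : Filter I), ∀ᶠ j in (D : Filter I), x j ∈ O i := by
  filter_upwards [hA] with i hi
  filter_upwards [hA, hi] with j hj hij
  obtain ⟨k, hjk, hk⟩ := (hj.and hA).exists
  rw [hOA i hi]
  exact mem_biUnion hk ⟨hij, hjk⟩

theorem eventually_eventually_mem_of_eventually_mem_upperCut
    (hOB : ∀ i, x i ∈ upperCut D x → O i = ⋃ b ∈ upperCut D x, Ioo b (x i))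
    (hB : ∀ᶠ i in (D : Filter I), x i ∈ upperCut D x) :
    ∀ᶠ i in (D : Filter I), ∀ᶠ j in (D : Filter I), x j ∈ O i := by
  filter_upwards [hB] with i hi
  filter_upwards [hB, hi] with j hj hji
  obtain ⟨k, hkj, hk⟩ := (hj.and hB).exists
  rw [hOB i hi]
  exact mem_biUnion hk ⟨hkj, hji⟩

theorem lt_of_mem_of_mem_lowerCut
    (hAB : lowerCut D x ∪ upperCut D x = Set.univ)
    (hOA : ∀ i, x i ∈ lowerCut D x → O i = ⋃ a ∈ lowerCut D x, Ioo (x i) a)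
    (hOB : ∀ i, x i ∈ upperCut D x → O i = ⋃ b ∈ upperCut D x, Ioo b (x i))
    {i : I} {w : X} (hw : w ∈ O i) (hwA : w ∈ lowerCut D x) : x i < w := by
  rcases eq_univ_iff_forall.1 hAB (x i) with hi | hi
  · rw [hOA i hi] at hw
    obtain ⟨a, -, hw⟩ := mem_iUnion₂.1 hw
    exact hw.1
  · rw [hOB i hi] at hw
    obtain ⟨b, hb, hw⟩ := mem_iUnion₂.1 hw
    exact absurd (lt_of_mem_lowerCut_of_mem_upperCut hwA hb) hw.1.not_gt

theorem lt_of_mem_of_mem_upperCut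
    (hAB : lowerCut D x ∪ upperCut D x = Set.univ)
    (hOA : ∀ i, x i ∈ lowerCut D x → O i = ⋃ a ∈ lowerCut D x, Ioo (x i) a)
    (hOB : ∀ i, x i ∈ upperCut D x → O i = ⋃ b ∈ upperCut D x, Ioo b (x i))
    {i : I} {w : X} (hw : w ∈ O i) (hwB : w ∈ upperCut D x) : w < x i := by
  rcases eq_univ_iff_forall.1 hAB (x i) with hi | hi
  · rw [hOA i hi] at hw
    obtain ⟨a, ha, hw⟩ := mem_iUnion₂.1 hw
    exact absurd (lt_of_mem_lowerCut_of_mem_upperCut ha hwB) hw.2.not_gt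
  · rw [hOB i hi] at hw
    obtain ⟨b, -, hw⟩ := mem_iUnion₂.1 hw
    exact hw.2

theorem eventually_mem_of_mem_lowerCut (hAB : lowerCut D x ∪ upperCut D x = Set.univ)
    (hOA : ∀ i, x i ∈ lowerCut D x → O i = ⋃ a ∈ lowerCut D x, Ioo (x i) a)
    (hOB : ∀ i, x i ∈ upperCut D x → O i = ⋃ b ∈ upperCut D x, Ioo b (x i))
    {p : X} {W : Set X} (hW : W.OrdConnected) (hpW : p ∈ W) (hp : p ∈ lowerCut D x)
    (hWO : ∀ᶠ i in (D : Filter I), (W ∩ O i).Nonempty) : ∀ᶠ i in (D : Filter I), x i ∈ W := by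
  by_cases hWB : (W ∩ upperCut D x).Nonempty
  · obtain ⟨q, hqW, hq⟩ := hWB
    filter_upwards [eventually_mem_Ioo_of_mem_lowerCut_of_mem_upperCut hp hq] with i hi
    exact hW.out hpW hqW (Ioo_subset_Icc_self hi)
  · have hWA : W ⊆ lowerCut D x := fun w hw =>
      (eq_univ_iff_forall.1 hAB w).resolve_right fun h => hWB ⟨w, hw, h⟩
    filter_upwards [hp, hWO] with i hpi ⟨w, hwW, hwO⟩
    exact hW.out hpW hwW ⟨hpi.le, (lt_of_mem_of_mem_lowerCut hAB hOA hOB hwO (hWA hwW)).le⟩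

theorem eventually_mem_of_mem_upperCut (hAB : lowerCut D x ∪ upperCut D x = Set.univ)
    (hOA : ∀ i, x i ∈ lowerCut D x → O i = ⋃ a ∈ lowerCut D x, Ioo (x i) a)
    (hOB : ∀ i, x i ∈ upperCut D x → O i = ⋃ b ∈ upperCut D x, Ioo b (x i))
    {p : X} {W : Set X} (hW : W.OrdConnected) (hpW : p ∈ W) (hp : p ∈ upperCut D x)
    (hWO : ∀ᶠ i in (D : Filter I), (W ∩ O i).Nonempty) : ∀ᶠ i in (D : Filter I), x i ∈ W := by
  by_cases hWA : (W ∩ lowerCut D x).Nonempty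
  · obtain ⟨q, hqW, hq⟩ := hWA
    filter_upwards [eventually_mem_Ioo_of_mem_lowerCut_of_mem_upperCut hq hp] with i hi
    exact hW.out hqW hpW (Ioo_subset_Icc_self hi)
  · have hWB : W ⊆ upperCut D x := fun w hw =>
      (eq_univ_iff_forall.1 hAB w).resolve_left fun h => hWA ⟨w, hw, h⟩
    filter_upwards [hp, hWO] with i hpi ⟨w, hwW, hwO⟩
    exact hW.out hwW hpW ⟨(lt_of_mem_of_mem_upperCut hAB hOA hOB hwO (hWB hwW)).le, hpi.le⟩

end UltrafilterCut

theorem dConv_iff_tendsto {X : Type*} [TopologicalSpace X] {I : Type*} {D : Ultrafilter I}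
    {x : I → X} {p : X} : DConv D x p ↔ Tendsto x (D : Filter I) (𝓝 p) := by
  rw [(nhds_basis_opens p).tendsto_right_iff]
  exact ⟨fun h U hU => h U hU.2 hU.1, fun h U hU hpU => h U ⟨hpU, hU⟩⟩

section UltrafilterCutTopology

variable {X : Type*} [LinearOrder X] [TopologicalSpace X] {I : Type*} {D : Ultrafilter I}
  {x : I → X} {O : I → Set X}

theorem dLimitPt_of_dConv (hAB : lowerCut D x ∪ upperCut D x = Set.univ)
    (hOA : ∀ i, x i ∈ lowerCut D x → O i = ⋃ a ∈ lowerCut D x, Ioo (x i) a)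
    (hOB : ∀ i, x i ∈ upperCut D x → O i = ⋃ b ∈ upperCut D x, Ioo b (x i))
    {p : X} (hc : DConv D x p) : DLimitPt D O p := by
  have hO : ∀ᶠ i in (D : Filter I), ∀ᶠ j in (D : Filter I), x j ∈ O i := by
    have hxAB := Eventually.of_forall (f := (D : Filter I)) fun i => eq_univ_iff_forall.1 hAB (x i)
    rcases Ultrafilter.eventually_or.1 hxAB with hA | hB
    · exact eventually_eventually_mem_of_eventually_mem_lowerCut hOA hA
    · exact eventually_eventually_mem_of_eventually_mem_upperCut hOB hB
  intro U hU
  filter_upwards [hO] with i hi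
  obtain ⟨j, hjO, hjU⟩ := (hi.and (dConv_iff_tendsto.1 hc hU)).exists
  exact ⟨x j, hjU, hjO⟩

theorem dConv_of_dLimitPt {𝓑 : Set (Set X)} (h𝓑 : IsTopologicalBasis 𝓑)
    (h𝓑conv : ∀ s ∈ 𝓑, s.OrdConnected) (hAB : lowerCut D x ∪ upperCut D x = Set.univ)
    (hOA : ∀ i, x i ∈ lowerCut D x → O i = ⋃ a ∈ lowerCut D x, Ioo (x i) a)
    (hOB : ∀ i, x i ∈ upperCut D x → O i = ⋃ b ∈ upperCut D x, Ioo b (x i))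
    {p : X} (hlim : DLimitPt D O p) : DConv D x p := by
  rw [dConv_iff_tendsto, h𝓑.nhds_hasBasis.tendsto_right_iff]
  rintro W ⟨hW𝓑, hpW⟩
  have hWO := hlim W (h𝓑.mem_nhds hW𝓑 hpW)
  rcases eq_univ_iff_forall.1 hAB p with hp | hp
  · exact eventually_mem_of_mem_lowerCut hAB hOA hOB (h𝓑conv W hW𝓑) hpW hp hWO
  · exact eventually_mem_of_mem_upperCut hAB hOA hOB (h𝓑conv W hW𝓑) hpW hp hWO

end UltrafilterCutTopology

theorem stmt6_general {X : Type u} [LinearOrder X] [TopologicalSpace X]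
    (hGO : ∃ 𝓑 : Set (Set X), IsTopologicalBasis 𝓑 ∧ ∀ s ∈ 𝓑, s.OrdConnected)
    {I : Type v} (D : Ultrafilter I) (x : I → X) (A B : Set X)
    (hA : A = {p : X | {i | p < x i} ∈ D}) (hB : B = {p : X | {i | x i < p} ∈ D})
    (hAB : A ∪ B = Set.univ) (O : I → Set X)
    (hOA : ∀ i, x i ∈ A → O i = ⋃ a ∈ A, Ioo (x i) a)
    (hOB : ∀ i, x i ∈ B → O i = ⋃ b ∈ B, Ioo b (x i))
    (p : X) :
    DConv D x p ↔ DLimitPt D O p := by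
  obtain ⟨𝓑, h𝓑, h𝓑conv⟩ := hGO
  subst hA hB
  exact ⟨dLimitPt_of_dConv hAB hOA hOB, dConv_of_dLimitPt h𝓑 h𝓑conv hAB hOA hOB⟩

/-- In a GO space with `X = A ∪ B`, the sequence `x` `D`-converges to `p` iff `p` is a
`D`-limit point of the sequence of open sets `O`. -/
theorem stmt6 {X : Type u} [LinearOrder X] [TopologicalSpace X] [T2Space X]
    (hGO : ∃ 𝓑 : Set (Set X), IsTopologicalBasis 𝓑 ∧ ∀ s ∈ 𝓑, s.OrdConnected)
    {I : Type v} (D : Ultrafilter I) (x : I → X) (A B : Set X)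
    (hA : A = {p : X | {i | p < x i} ∈ D}) (hB : B = {p : X | {i | x i < p} ∈ D})
    (hAB : A ∪ B = Set.univ) (O : I → Set X)
    (hOA : ∀ i, x i ∈ A → O i = ⋃ a ∈ A, Ioo (x i) a)
    (hOB : ∀ i, x i ∈ B → O i = ⋃ b ∈ B, Ioo b (x i))
    (p : X) :
    DConv D x p ↔ DLimitPt D O p :=
  stmt6_general hGO D x A B hA hB hAB O hOA hOB p
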